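/- arXiv:1509.05065 — 2 statements merged into one kernel-verified Lean document; each statement's English description precedes it below -/
import Mathlib

section
/- If a Banach space B has modulus of uniform smoothness satisfying ρ_B(τ) ≤ C τ^γ for all τ > 0 (for some constants C > 0 and γ ∈ (1,2]), then B has Rademacher type-γ constant at most C' for some constant C' depending only on C and γ; concretely, for all Z_1,...,Z_k ∈ B, E_{ε} ‖∑_{i=1}^k ε_i Z_i‖_B^γ ≤ (C')^γ ∑_{i=1}^k ‖Z_i‖_B^γ. -/
/-- The sign `±1` associated to a Boolean (Rademacher variable). -/
noncomputable def sgn (b : Bool) : ℝ := if b then 1 else -1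

/-!
Smoothness of power type `γ` gives the two-point inequality
`‖u + v‖^γ + ‖u - v‖^γ ≤ 2‖u‖^γ + 2L‖v‖^γ` with `L = 4 + (1 + C)²`: for `‖v‖ ≤ ‖u‖`
normalise to `‖u‖ = 1`, where `‖u ± v‖` have sum at most `2 + 2C‖v‖^γ` and difference at most
`2‖v‖`, so their second moment is `1 + O(‖v‖^γ)` and the power-mean inequality (`γ ≤ 2`) bounds
their `γ`-th moment; for `‖u‖ ≤ ‖v‖` everything is crudely `O(‖v‖^γ)`. Averaging the two-point
inequality over one sign at a time, with `u` the sum of the remaining terms, gives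
`E‖∑ εᵢ Zᵢ‖^γ ≤ L ∑ ‖Zᵢ‖^γ ≤ L^γ ∑ ‖Zᵢ‖^γ`.
-/

open Real

/-- `E_ε F(∑ εᵢ Zᵢ)` for independent Rademacher signs `εᵢ`. -/
noncomputable def rademacherMean {E : Type*} [AddCommGroup E] [Module ℝ E] (F : E → ℝ) {k : ℕ}
    (Z : Fin k → E) : ℝ :=
  ((2 : ℝ) ^ k)⁻¹ * ∑ s : Fin k → Bool, F (∑ i, sgn (s i) • Z i)

/-- The modulus of uniform smoothness satisfies `ρ_B(τ) ≤ C τ^γ`. -/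
def UniformlySmoothOfPowerType (B : Type*) [SeminormedAddCommGroup B] [NormedSpace ℝ B]
    (C γ : ℝ) : Prop :=
  ∀ τ : ℝ, 0 < τ → ∀ x y : B, ‖x‖ = 1 → ‖y‖ = 1 →
    (‖x + τ • y‖ + ‖x - τ • y‖) / 2 - 1 ≤ C * τ ^ γ

section RademacherMean

variable {E : Type*} [AddCommGroup E] [Module ℝ E]

lemma rademacherMean_succ (F : E → ℝ) {k : ℕ} (Z : Fin (k + 1) → E) :
    rademacherMean F Z =
      rademacherMean (fun u => (F (u + Z 0) + F (u - Z 0)) / 2) (Fin.tail Z) := by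
  have hplus : ∀ t : Fin k → Bool, ∑ i, sgn ((Fin.cons true t : Fin (k + 1) → Bool) i) • Z i =
      ∑ i, sgn (t i) • Fin.tail Z i + Z 0 := fun t => by
    simp [Fin.sum_univ_succ, sgn, Fin.tail, add_comm]
  have hminus : ∀ t : Fin k → Bool, ∑ i, sgn ((Fin.cons false t : Fin (k + 1) → Bool) i) • Z i =
      ∑ i, sgn (t i) • Fin.tail Z i - Z 0 := fun t => by
    simp [Fin.sum_univ_succ, sgn, Fin.tail, neg_add_eq_sub]
  unfold rademacherMean
  rw [← Equiv.sum_comp (Fin.consEquiv fun _ => Bool), Fintype.sum_prod_type, Finset.sum_comm,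
    Finset.mul_sum, Finset.mul_sum]
  refine Finset.sum_congr rfl fun t _ => ?_
  simp only [Fin.consEquiv_apply, Fintype.sum_bool, hplus, hminus]
  rw [pow_succ]
  field_simp

lemma rademacherMean_mono {F G : E → ℝ} (hFG : ∀ u, F u ≤ G u) {k : ℕ} (Z : Fin k → E) :
    rademacherMean F Z ≤ rademacherMean G Z :=
  mul_le_mul_of_nonneg_left (Finset.sum_le_sum fun s _ => hFG _) (by positivity)

lemma rademacherMean_add_const (F : E → ℝ) (c : ℝ) {k : ℕ} (Z : Fin k → E) :
    rademacherMean (fun u => F u + c) Z = rademacherMean F Z + c := by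
  simp only [rademacherMean, Finset.sum_add_distrib, Finset.sum_const, Finset.card_univ,
    Fintype.card_fun, Fintype.card_fin, Fintype.card_bool, nsmul_eq_mul, Nat.cast_pow,
    Nat.cast_ofNat]
  field_simp

lemma rademacherMean_le_of_add_add_sub_le (F G : E → ℝ)
    (hFG : ∀ u v, F (u + v) + F (u - v) ≤ 2 * F u + 2 * G v) {k : ℕ} (Z : Fin k → E) :
    rademacherMean F Z ≤ F 0 + ∑ i, G (Z i) := by
  induction k with
  | zero => simp [rademacherMean]
  | succ k ih =>
    calc rademacherMean F Z
        = rademacherMean (fun u => (F (u + Z 0) + F (u - Z 0)) / 2) (Fin.tail Z) :=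
          rademacherMean_succ F Z
      _ ≤ rademacherMean (fun u => F u + G (Z 0)) (Fin.tail Z) :=
          rademacherMean_mono (fun u => by linarith [hFG u (Z 0)]) _
      _ = rademacherMean F (Fin.tail Z) + G (Z 0) := rademacherMean_add_const F _ _
      _ ≤ F 0 + ∑ i, G (Fin.tail Z i) + G (Z 0) := by linarith [ih (Fin.tail Z)]
      _ = F 0 + ∑ i, G (Z i) := by rw [Fin.sum_univ_succ]; simp only [Fin.tail]; ring

end RademacherMean

lemma add_rpow_div_two_le_sq_mean_rpow {γ a b : ℝ} (hγ0 : 0 ≤ γ) (hγ2 : γ ≤ 2) (ha : 0 ≤ a)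
    (hb : 0 ≤ b) : (a ^ γ + b ^ γ) / 2 ≤ ((a ^ 2 + b ^ 2) / 2) ^ (γ / 2) := by
  have hsq : ∀ x : ℝ, 0 ≤ x → (x ^ 2) ^ (γ / 2) = x ^ γ := fun x hx => by
    rw [← rpow_two, ← rpow_mul hx, mul_div_cancel₀ _ two_ne_zero]
  have h := (concaveOn_rpow (p := γ / 2) (by positivity) (by linarith)).2
    (Set.mem_Ici.2 (sq_nonneg a)) (Set.mem_Ici.2 (sq_nonneg b))
    (by norm_num : (0 : ℝ) ≤ 1 / 2) (by norm_num : (0 : ℝ) ≤ 1 / 2) (by norm_num)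
  simp only [smul_eq_mul, hsq a ha, hsq b hb] at h
  calc (a ^ γ + b ^ γ) / 2 = 1 / 2 * a ^ γ + 1 / 2 * b ^ γ := by ring
    _ ≤ (1 / 2 * a ^ 2 + 1 / 2 * b ^ 2) ^ (γ / 2) := h
    _ = ((a ^ 2 + b ^ 2) / 2) ^ (γ / 2) := by congr 1; ring

lemma rpow_add_rpow_le_of_add_le_of_abs_sub_le {γ C τ a b : ℝ} (hγ0 : 0 < γ) (hγ2 : γ ≤ 2)
    (hτ0 : 0 ≤ τ) (hτ1 : τ ≤ 1) (ha : 0 ≤ a) (hb : 0 ≤ b) (hsum : a + b ≤ 2 + 2 * C * τ ^ γ)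
    (hdiff : |a - b| ≤ 2 * τ) : a ^ γ + b ^ γ ≤ 2 + 2 * (1 + C) ^ 2 * τ ^ γ := by
  set t := τ ^ γ
  have ht0 : 0 ≤ t := rpow_nonneg hτ0 γ
  have ht1 : t ≤ 1 := rpow_le_one hτ0 hτ1 hγ0.le
  have hτt : τ ^ 2 ≤ t := by
    rw [← rpow_two]; exact rpow_le_rpow_of_exponent_ge' hτ0 hτ1 hγ0.le hγ2
  have hmoment : (a ^ 2 + b ^ 2) / 2 ≤ 1 + (1 + C) ^ 2 * t := by
    have hsum_sq : (a + b) ^ 2 ≤ (2 + 2 * C * t) ^ 2 := by gcongr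
    have hdiff_sq : (a - b) ^ 2 ≤ (2 * τ) ^ 2 := sq_le_sq' (abs_le.1 hdiff).1 (abs_le.1 hdiff).2
    have htt : C ^ 2 * t ^ 2 ≤ C ^ 2 * t := by gcongr; nlinarith
    nlinarith
  calc a ^ γ + b ^ γ ≤ 2 * ((a ^ 2 + b ^ 2) / 2) ^ (γ / 2) := by
        linarith [add_rpow_div_two_le_sq_mean_rpow hγ0.le hγ2 ha hb]
    _ ≤ 2 * (1 + (1 + C) ^ 2 * t) ^ (γ / 2) := by gcongr
    _ ≤ 2 * (1 + (1 + C) ^ 2 * t) := by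
        gcongr; exact rpow_le_self_of_one_le (by nlinarith) (by linarith)
    _ = 2 + 2 * (1 + C) ^ 2 * t := by ring

lemma norm_add_rpow_add_norm_sub_rpow_le_eight_mul {E : Type*} [SeminormedAddCommGroup E]
    {γ : ℝ} (hγ0 : 0 ≤ γ) (hγ2 : γ ≤ 2) {u v : E} (huv : ‖u‖ ≤ ‖v‖) :
    ‖u + v‖ ^ γ + ‖u - v‖ ^ γ ≤ 8 * ‖v‖ ^ γ := by
  have h2 : (2 : ℝ) ^ γ ≤ 4 := by
    calc (2 : ℝ) ^ γ ≤ 2 ^ (2 : ℝ) := rpow_le_rpow_of_exponent_le (by norm_num) hγ2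
      _ = 4 := by norm_num [rpow_two]
  have hbound : ∀ w : E, ‖w‖ ≤ ‖u‖ + ‖v‖ → ‖w‖ ^ γ ≤ 4 * ‖v‖ ^ γ := fun w hw =>
    calc ‖w‖ ^ γ ≤ (2 * ‖v‖) ^ γ := by gcongr; linarith
      _ = 2 ^ γ * ‖v‖ ^ γ := mul_rpow (by norm_num) (norm_nonneg v)
      _ ≤ 4 * ‖v‖ ^ γ := by gcongr
  linarith [hbound _ (norm_add_le u v), hbound _ (norm_sub_le u v)]

namespace UniformlySmoothOfPowerType

variable {B : Type*} [NormedAddCommGroup B] [NormedSpace ℝ B] {C γ : ℝ}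

lemma norm_add_add_norm_sub_le (h : UniformlySmoothOfPowerType B C γ) (hγ0 : 0 < γ) {x : B}
    (hx : ‖x‖ = 1) (w : B) : ‖x + w‖ + ‖x - w‖ ≤ 2 + 2 * C * ‖w‖ ^ γ := by
  rcases eq_or_ne w 0 with rfl | hw
  · norm_num [hx, zero_rpow hγ0.ne']
  have hw0 : 0 < ‖w‖ := norm_pos_iff.2 hw
  have hy : ‖‖w‖⁻¹ • w‖ = 1 := by rw [norm_smul, norm_inv, norm_norm, inv_mul_cancel₀ hw0.ne']
  have := h ‖w‖ hw0 x _ hx hy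
  rw [smul_inv_smul₀ hw0.ne'] at this
  linarith

lemma norm_add_rpow_add_norm_sub_rpow_le_of_norm_eq_one (h : UniformlySmoothOfPowerType B C γ)
    (hγ0 : 0 < γ) (hγ2 : γ ≤ 2) {x w : B} (hx : ‖x‖ = 1) (hw : ‖w‖ ≤ 1) :
    ‖x + w‖ ^ γ + ‖x - w‖ ^ γ ≤ 2 + 2 * (1 + C) ^ 2 * ‖w‖ ^ γ := by
  refine rpow_add_rpow_le_of_add_le_of_abs_sub_le hγ0 hγ2 (norm_nonneg w) hw (norm_nonneg _)
    (norm_nonneg _) (h.norm_add_add_norm_sub_le hγ0 hx w) ?_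
  calc |‖x + w‖ - ‖x - w‖| ≤ ‖(x + w) - (x - w)‖ := abs_norm_sub_norm_le _ _
    _ = 2 * ‖w‖ := by rw [add_sub_sub_cancel, ← two_smul ℝ w, norm_smul, Real.norm_two]

lemma norm_add_rpow_add_norm_sub_rpow_le_of_norm_le (h : UniformlySmoothOfPowerType B C γ)
    (hγ0 : 0 < γ) (hγ2 : γ ≤ 2) {u v : B} (hu : u ≠ 0) (hvu : ‖v‖ ≤ ‖u‖) :
    ‖u + v‖ ^ γ + ‖u - v‖ ^ γ ≤ 2 * ‖u‖ ^ γ + 2 * (1 + C) ^ 2 * ‖v‖ ^ γ := by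
  set r := ‖u‖
  have hr : 0 < r := norm_pos_iff.2 hu
  have hscale : ∀ z : B, ‖r • z‖ ^ γ = r ^ γ * ‖z‖ ^ γ := fun z => by
    rw [norm_smul, norm_norm, mul_rpow hr.le (norm_nonneg z)]
  have hx : ‖r⁻¹ • u‖ = 1 := by rw [norm_smul, norm_inv, norm_norm, inv_mul_cancel₀ hr.ne']
  have hw : ‖r⁻¹ • v‖ ≤ 1 := by
    rw [norm_smul, norm_inv, norm_norm]; exact inv_mul_le_one_of_le₀ hvu hr.le
  have hunit := h.norm_add_rpow_add_norm_sub_rpow_le_of_norm_eq_one hγ0 hγ2 hx hw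
  have hu' : u = r • r⁻¹ • u := (smul_inv_smul₀ hr.ne' u).symm
  have hv' : v = r • r⁻¹ • v := (smul_inv_smul₀ hr.ne' v).symm
  calc ‖u + v‖ ^ γ + ‖u - v‖ ^ γ
      = r ^ γ * (‖r⁻¹ • u + r⁻¹ • v‖ ^ γ + ‖r⁻¹ • u - r⁻¹ • v‖ ^ γ) := by
        rw [mul_add, ← hscale, ← hscale, smul_add, smul_sub, ← hu', ← hv']
    _ ≤ r ^ γ * (2 + 2 * (1 + C) ^ 2 * ‖r⁻¹ • v‖ ^ γ) := by gcongr
    _ = 2 * r ^ γ + 2 * (1 + C) ^ 2 * ‖v‖ ^ γ := by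
        rw [hv', hscale, smul_inv_smul₀ hr.ne']; ring

lemma norm_add_rpow_add_norm_sub_rpow_le (h : UniformlySmoothOfPowerType B C γ) (hγ0 : 0 < γ)
    (hγ2 : γ ≤ 2) (u v : B) :
    ‖u + v‖ ^ γ + ‖u - v‖ ^ γ ≤ 2 * ‖u‖ ^ γ + 2 * (4 + (1 + C) ^ 2) * ‖v‖ ^ γ := by
  have hu0 : 0 ≤ ‖u‖ ^ γ := rpow_nonneg (norm_nonneg u) γ
  have hv0 : 0 ≤ ‖v‖ ^ γ := rpow_nonneg (norm_nonneg v) γ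
  rcases le_or_gt ‖u‖ ‖v‖ with huv | hvu
  · have := norm_add_rpow_add_norm_sub_rpow_le_eight_mul hγ0.le hγ2 huv
    nlinarith [sq_nonneg (1 + C)]
  · have hu : u ≠ 0 := norm_pos_iff.1 ((norm_nonneg v).trans_lt hvu)
    have := h.norm_add_rpow_add_norm_sub_rpow_le_of_norm_le hγ0 hγ2 hu hvu.le
    linarith

end UniformlySmoothOfPowerType

theorem smooth_implies_type_general {B : Type*} [NormedAddCommGroup B] [NormedSpace ℝ B]
    (C γ : ℝ) (hγ1 : 1 < γ) (hγ2 : γ ≤ 2)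
    (hsmooth : ∀ τ : ℝ, 0 < τ → ∀ x y : B, ‖x‖ = 1 → ‖y‖ = 1 →
      (‖x + τ • y‖ + ‖x - τ • y‖) / 2 - 1 ≤ C * τ ^ γ) :
    ∃ C' : ℝ, 0 < C' ∧ ∀ (k : ℕ) (Z : Fin k → B),
      ((2 : ℝ) ^ k)⁻¹ * ∑ s : Fin k → Bool, ‖∑ i, sgn (s i) • Z i‖ ^ γ ≤
        C' ^ γ * ∑ i, ‖Z i‖ ^ γ := by
  have hγ0 : 0 < γ := by linarith
  set L := 4 + (1 + C) ^ 2
  have hL : 1 ≤ L := by nlinarith [sq_nonneg (1 + C)]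
  refine ⟨L, by linarith, fun k Z => ?_⟩
  have htwo : ∀ u v : B, ‖u + v‖ ^ γ + ‖u - v‖ ^ γ ≤ 2 * ‖u‖ ^ γ + 2 * (L * ‖v‖ ^ γ) :=
    fun u v => by
      linarith [UniformlySmoothOfPowerType.norm_add_rpow_add_norm_sub_rpow_le hsmooth hγ0 hγ2 u v]
  calc rademacherMean (‖·‖ ^ γ) Z ≤ ‖(0 : B)‖ ^ γ + ∑ i, L * ‖Z i‖ ^ γ :=
        rademacherMean_le_of_add_add_sub_le (fun u : B => ‖u‖ ^ γ) (fun v => L * ‖v‖ ^ γ) htwo Z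
    _ = L * ∑ i, ‖Z i‖ ^ γ := by rw [norm_zero, zero_rpow hγ0.ne', zero_add, Finset.mul_sum]
    _ ≤ L ^ γ * ∑ i, ‖Z i‖ ^ γ := by
        gcongr
        exact self_le_rpow_of_one_le hL hγ1.le

/-- If a normed space `B` has modulus of uniform smoothness `ρ_B(τ) ≤ C τ^γ`
for some `C > 0` and `γ ∈ (1,2]`, then `B` has Rademacher type-γ constant at
most some `C'` depending only on `C` and `γ`: for all `Z_1, ..., Z_k ∈ B`,
`E_ε ‖∑ i ε_i Z_i‖^γ ≤ (C')^γ ∑ i ‖Z_i‖^γ`. -/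
theorem smooth_implies_type {B : Type*} [NormedAddCommGroup B] [NormedSpace ℝ B]
    (C γ : ℝ) (hC : 0 < C) (hγ1 : 1 < γ) (hγ2 : γ ≤ 2)
    (hsmooth : ∀ τ : ℝ, 0 < τ → ∀ x y : B, ‖x‖ = 1 → ‖y‖ = 1 →
      (‖x + τ • y‖ + ‖x - τ • y‖) / 2 - 1 ≤ C * τ ^ γ) :
    ∃ C' : ℝ, 0 < C' ∧ ∀ (k : ℕ) (Z : Fin k → B),
      ((2 : ℝ) ^ k)⁻¹ * ∑ s : Fin k → Bool, ‖∑ i, sgn (s i) • Z i‖ ^ γ ≤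
        C' ^ γ * ∑ i, ‖Z i‖ ^ γ :=
  smooth_implies_type_general C γ hγ1 hγ2 hsmooth
end

section
/- Sparsification of 1-LOCC measurements: Let M = ∑_{i=1}^n X_i ⊗ Y_i with X_i ⪰ 0, ∑_i X_i ⪯ I_{d_1}, 0 ⪯ Y_i ⪯ I_{d_2}, and ε > 0. Then there exists M' = ∑_{j=1}^{n'} X'_j ⊗ Y'_j with X'_j ⪰ 0, ∑_j X'_j ⪯ I_{d_1}, 0 ⪯ Y'_j ⪯ I_{d_2}, n' ≤ 8 d_1² d_2² log(2 d_1 d_2) / (ε/3)², and ‖M − M'‖_∞ ≤ ε, where each Y'_j is (a scalar multiple of) one of the Y_i. -/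
open scoped ComplexOrder Kronecker

noncomputable def opNorm {n : Type*} [Fintype n] [DecidableEq n]
    (A : Matrix n n ℂ) : ℝ :=
  ‖Matrix.toEuclideanCLM (𝕜 := ℂ) A‖

/-!
The sparsification can be made exact. The pairs `(X i ⊗ Y i, X i)` live in a real vector space
of dimension `2 (d₁ d₂)² + 2 d₁²`, so by Carathéodory's theorem their sum is a nonnegative
combination of at most that many plus one of them. Rescaling the corresponding `X i` gives
`M' = M` with `∑ X'_j = ∑ X_i`, and for `ε < 1` this number of terms is below the stated bound.
If `‖M‖ ≤ ε`, in particular if `ε ≥ 1` (since `0 ⪯ M ⪯ I`), the empty family already works.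
-/

namespace Matrix

variable {𝕜 ι m n : Type*} [RCLike 𝕜] [Fintype ι] [Fintype m] [Fintype n]

theorem posSemidef_sum_kronecker {X : ι → Matrix m m 𝕜} {Y : ι → Matrix n n 𝕜}
    (hX : ∀ i, (X i).PosSemidef) (hY : ∀ i, (Y i).PosSemidef) :
    (∑ i, X i ⊗ₖ Y i).PosSemidef :=
  posSemidef_sum _ fun i _ => (hX i).kronecker (hY i)

variable [DecidableEq m] [DecidableEq n]

theorem posSemidef_one_sub_sum_kronecker {X : ι → Matrix m m 𝕜} {Y : ι → Matrix n n 𝕜}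
    (hX : ∀ i, (X i).PosSemidef) (hXsum : (1 - ∑ i, X i).PosSemidef)
    (hYI : ∀ i, (1 - Y i).PosSemidef) :
    (1 - ∑ i, X i ⊗ₖ Y i).PosSemidef := by
  have hsplit : 1 - ∑ i, X i ⊗ₖ Y i = (1 - ∑ i, X i) ⊗ₖ (1 : Matrix n n 𝕜) +
      ∑ i, X i ⊗ₖ (1 - Y i) := by
    ext ⟨a, b⟩ ⟨a', b'⟩
    simp only [sub_apply, add_apply, sum_apply, kronecker_apply, one_apply, mul_sub,
      Finset.sum_sub_distrib]
    split_ifs <;> simp_all; ring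
  rw [hsplit]
  exact (hXsum.kronecker .one).add (posSemidef_sum_kronecker hX hYI)

end Matrix

open scoped MatrixOrder Matrix.Norms.L2Operator in
theorem opNorm_le_one_of_posSemidef {m : Type*} [Fintype m] [DecidableEq m] {A : Matrix m m ℂ}
    (hA : A.PosSemidef) (hA1 : (1 - A).PosSemidef) : opNorm A ≤ 1 := by
  rw [opNorm, ← Matrix.cstar_norm_def, CStarAlgebra.norm_le_one_iff_of_nonneg A hA.nonneg]
  exact sub_nonneg.mp hA1.nonneg

theorem finrank_real_matrix_prod_matrix (m n : Type*) [Fintype m] [Fintype n] :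
    Module.finrank ℝ (Matrix m m ℂ × Matrix n n ℂ) =
      2 * Fintype.card m ^ 2 + 2 * Fintype.card n ^ 2 := by
  simp only [Module.finrank_prod, Module.finrank_matrix, Complex.finrank_real_complex]
  ring

open Module in
theorem exists_nonneg_sum_smul_eq_sum {𝕜 α V : Type*} [Field 𝕜] [LinearOrder 𝕜]
    [IsStrictOrderedRing 𝕜] [Fintype α] [AddCommGroup V] [Module 𝕜 V] [FiniteDimensional 𝕜 V]
    (s : α → V) :
    ∃ (k : ℕ) (g : Fin k → α) (c : Fin k → 𝕜),
      k ≤ finrank 𝕜 V + 1 ∧ (∀ j, 0 ≤ c j) ∧ ∑ j, c j • s (g j) = ∑ a, s a := by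
  cases isEmpty_or_nonempty α
  · exact ⟨0, Fin.elim0, Fin.elim0, by omega, fun j => j.elim0, by simp⟩
  set N : 𝕜 := (Fintype.card α : 𝕜)
  have hN : 0 < N := by simp [N, Fintype.card_pos]
  -- The barycentre of the family lies in its convex hull; Carathéodory then picks an affinely
  -- independent subfamily, and rescaling its weights by `N` recovers the sum.
  have hmem : N⁻¹ • ∑ a, s a ∈ convexHull 𝕜 (Set.range s) := by
    rw [Finset.smul_sum]
    refine (convex_convexHull 𝕜 _).sum_mem (fun _ _ => by positivity) ?_
      fun a _ => subset_convexHull 𝕜 _ (Set.mem_range_self a)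
    simp [N, hN.ne']
  obtain ⟨ι, _, z, w, hz, hind, hw, -, hwz⟩ := eq_pos_convex_span_of_mem_convexHull hmem
  choose g hg using fun i => hz (Set.mem_range_self i)
  let e := (Fintype.equivFin ι).symm
  refine ⟨Fintype.card ι, g ∘ e, fun j => N * w (e j), hind.card_le_finrank_succ.trans ?_,
    fun j => (mul_pos hN (hw _)).le, ?_⟩
  · simpa using Submodule.finrank_le _
  · simp only [Function.comp_apply]
    rw [e.sum_comp (fun i => (N * w i) • s (g i))]
    simp only [hg, mul_smul, ← Finset.smul_sum, hwz, smul_inv_smul₀ hN.ne']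

theorem two_mul_sq_add_two_mul_sq_add_one_le {d1 d2 : ℕ} (hd1 : 0 < d1) (hd2 : 0 < d2)
    {ε : ℝ} (hε : 0 < ε) (hε1 : ε < 1) :
    ((2 * (d1 * d2) ^ 2 + 2 * d1 ^ 2 + 1 : ℕ) : ℝ) ≤
      8 * d1 ^ 2 * d2 ^ 2 * Real.log (2 * d1 * d2) / (ε / 3) ^ 2 := by
  have h1 : (1 : ℝ) ≤ d1 := by exact_mod_cast hd1
  have h2 : (1 : ℝ) ≤ d2 := by exact_mod_cast hd2
  have hP : (1 : ℝ) ≤ d1 ^ 2 * d2 ^ 2 :=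
    one_le_mul_of_one_le_of_one_le (one_le_pow₀ h1) (one_le_pow₀ h2)
  have hlog : (0.69 : ℝ) ≤ Real.log (2 * d1 * d2) := by
    refine le_trans ?_ (Real.log_le_log two_pos (by nlinarith))
    linarith [Real.log_two_gt_d9]
  have hd1P : (d1 : ℝ) ^ 2 ≤ d1 ^ 2 * d2 ^ 2 :=
    le_mul_of_one_le_right (by positivity) (one_le_pow₀ h2)
  rw [le_div_iff₀ (by positivity)]
  push_cast
  calc (2 * (d1 * d2 : ℝ) ^ 2 + 2 * d1 ^ 2 + 1) * (ε / 3) ^ 2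
      ≤ 5 * (d1 ^ 2 * d2 ^ 2) * (1 / 9) := by
        gcongr
        · nlinarith
        · nlinarith
    _ ≤ 8 * (d1 ^ 2 * d2 ^ 2) * Real.log (2 * d1 * d2) := by nlinarith
    _ = 8 * d1 ^ 2 * d2 ^ 2 * Real.log (2 * d1 * d2) := by ring

/-- Sparsification of 1-LOCC measurements: any `M = ∑_{i=1}^n X_i ⊗ Y_i` with
`X_i ⪰ 0`, `∑ X_i ⪯ I`, `0 ⪯ Y_i ⪯ I` admits an approximation
`M' = ∑_{j=1}^{n'} X'_j ⊗ Y'_j` of the same form with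
`n' ≤ 8 d1² d2² log(2 d1 d2) / (ε/3)²`, `‖M - M'‖_∞ ≤ ε`, and each `Y'_j` a
nonnegative multiple of some `Y_i`. -/
theorem sparsification {d1 d2 n : ℕ}
    (X : Fin n → Matrix (Fin d1) (Fin d1) ℂ)
    (Y : Fin n → Matrix (Fin d2) (Fin d2) ℂ)
    (hX : ∀ i, (X i).PosSemidef)
    (hXsum : ((1 : Matrix (Fin d1) (Fin d1) ℂ) - ∑ i, X i).PosSemidef)
    (hY : ∀ i, (Y i).PosSemidef)
    (hYI : ∀ i, ((1 : Matrix (Fin d2) (Fin d2) ℂ) - Y i).PosSemidef)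
    (ε : ℝ) (hε : 0 < ε) :
    ∃ (n' : ℕ) (X' : Fin n' → Matrix (Fin d1) (Fin d1) ℂ)
      (Y' : Fin n' → Matrix (Fin d2) (Fin d2) ℂ),
      (∀ j, (X' j).PosSemidef) ∧
      ((1 : Matrix (Fin d1) (Fin d1) ℂ) - ∑ j, X' j).PosSemidef ∧
      (∀ j, (Y' j).PosSemidef ∧ ((1 : Matrix (Fin d2) (Fin d2) ℂ) - Y' j).PosSemidef) ∧
      (n' : ℝ) ≤ 8 * d1 ^ 2 * d2 ^ 2 * Real.log (2 * d1 * d2) / (ε / 3) ^ 2 ∧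
      opNorm ((∑ i, X i ⊗ₖ Y i) - ∑ j, X' j ⊗ₖ Y' j) ≤ ε ∧
      (∀ j, ∃ (i : Fin n) (c : ℝ), 0 ≤ c ∧ Y' j = (c : ℂ) • Y i) := by
  set M := ∑ i, X i ⊗ₖ Y i
  by_cases hM : opNorm M ≤ ε
  · have hlog : 0 ≤ Real.log (2 * d1 * d2) := by
      exact_mod_cast Real.log_natCast_nonneg (2 * d1 * d2)
    refine ⟨0, Fin.elim0, Fin.elim0, (·.elim0), by simpa using Matrix.PosSemidef.one, (·.elim0),
      ?_, by simpa using hM, (·.elim0)⟩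
    exact_mod_cast div_nonneg (mul_nonneg (by positivity) hlog) (by positivity)
  have hε1 : ε < 1 := (not_le.mp hM).trans_le <| opNorm_le_one_of_posSemidef
    (Matrix.posSemidef_sum_kronecker hX hY) (Matrix.posSemidef_one_sub_sum_kronecker hX hXsum hYI)
  obtain ⟨hd1, hd2⟩ : 0 < d1 ∧ 0 < d2 := by
    refine ⟨Nat.pos_of_ne_zero ?_, Nat.pos_of_ne_zero ?_⟩ <;>
      rintro rfl <;> exact hM (by simp [Subsingleton.elim M 0, opNorm, hε.le])
  obtain ⟨k, g, c, hk, hc, hsum⟩ :=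
    exists_nonneg_sum_smul_eq_sum (𝕜 := ℝ) fun i => (X i ⊗ₖ Y i, X i)
  have hXsum' : ∑ j, c j • X (g j) = ∑ i, X i := by
    simpa [Prod.snd_sum] using congrArg Prod.snd hsum
  have hM' : ∑ j, (c j • X (g j)) ⊗ₖ Y (g j) = M := by
    simpa [Prod.fst_sum, Matrix.smul_kronecker] using congrArg Prod.fst hsum
  refine ⟨k, fun j => c j • X (g j), fun j => Y (g j), fun j => (hX _).smul (hc j),
    hXsum' ▸ hXsum, fun j => ⟨hY _, hYI _⟩, ?_, by simp [hM', opNorm, hε.le],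
    fun j => ⟨g j, 1, zero_le_one, by simp⟩⟩
  refine le_trans ?_ (two_mul_sq_add_two_mul_sq_add_one_le hd1 hd2 hε hε1)
  rw [finrank_real_matrix_prod_matrix, Fintype.card_prod, Fintype.card_fin, Fintype.card_fin] at hk
  exact_mod_cast hk
end
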